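/- arXiv:1710.00162 — 4 statements merged into one kernel-verified Lean document; each statement's English description precedes it below -/
import Mathlib

section
/- Let f : R^n → R be differentiable with L-Lipschitz gradient, let e be a random vector uniformly distributed on the unit Euclidean sphere, and let y = x − (1/L)⟨∇f(x), e⟩e. Then ‖∇f(x)‖₂² ≤ 2nL·(f(x) − E_e[f(y)]). -/
/-!
By the descent lemma for a function with `L`-Lipschitz gradient, the step from `x` to
`x - (1/L)⟨∇f(x), e⟩e` along a unit vector `e` decreases `f` by at least `⟨∇f(x), e⟩² / (2L)`.
For a rotation-invariant distribution on the sphere, `E⟨g, e⟩²` depends only on `‖g‖` (a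
reflection maps any vector to any other of the same norm), and summing it over an orthonormal
basis gives `E‖e‖² = 1`; hence `n E⟨g, e⟩² = ‖g‖²`, and averaging the pointwise decrease proves
the claim.
-/

open MeasureTheory Submodule

theorem Continuous.integrable_of_ae_mem_isCompact {X F : Type*} [TopologicalSpace X] [T2Space X]
    [MeasurableSpace X] [OpensMeasurableSpace X] [NormedAddCommGroup F] {μ : Measure X}
    [IsFiniteMeasureOnCompacts μ] {h : X → F} (hh : Continuous h) {K : Set X} (hK : IsCompact K)
    (hμK : ∀ᵐ x ∂μ, x ∈ K) : Integrable h μ := by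
  rw [← Measure.restrict_eq_self_of_ae_mem hμK]
  exact hh.continuousOn.integrableOn_compact hK

section Descent

variable {F : Type*} [NormedAddCommGroup F] [InnerProductSpace ℝ F] [CompleteSpace F]
  {f : F → ℝ} {L : ℝ} {x : F}

theorem le_add_inner_gradient_add_sq (hf : Differentiable ℝ f)
    (hlip : ∀ z, ‖gradient f z - gradient f x‖ ≤ L * ‖z - x‖) (v : F) :
    f (x + v) ≤ f x + inner ℝ (gradient f x) v + L / 2 * ‖v‖ ^ 2 := by
  set g := gradient f x
  let φ : ℝ → ℝ := fun t ↦ f (x + t • v) - t * inner ℝ g v - L / 2 * t ^ 2 * ‖v‖ ^ 2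
  have hφ' (t : ℝ) :
      HasDerivAt φ (inner ℝ (gradient f (x + t • v) - g) v - L * t * ‖v‖ ^ 2) t := by
    have hline : HasDerivAt (fun t : ℝ ↦ x + t • v) v t := by
      simpa using ((hasDerivAt_id t).smul_const v).const_add x
    have hcomp := (hf _).hasGradientAt.hasFDerivAt.comp_hasDerivAt t hline
    refine ((hcomp.sub ((hasDerivAt_id t).mul_const (inner ℝ g v))).sub
      (((hasDerivAt_pow 2 t).const_mul (L / 2)).mul_const (‖v‖ ^ 2))).congr_deriv ?_
    simp only [InnerProductSpace.toDual_apply_apply, inner_sub_left]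
    ring
  have hanti : AntitoneOn φ (Set.Ici 0) := by
    refine antitoneOn_of_hasDerivWithinAt_nonpos (convex_Ici 0)
      (fun t _ ↦ (hφ' t).continuousAt.continuousWithinAt) (fun t _ ↦ (hφ' t).hasDerivWithinAt)
      fun t ht ↦ ?_
    rw [interior_Ici, Set.mem_Ioi] at ht
    have hnorm : ‖gradient f (x + t • v) - g‖ ≤ L * (t * ‖v‖) := by
      simpa [norm_smul, abs_of_pos ht] using hlip (x + t • v)
    nlinarith [real_inner_le_norm (gradient f (x + t • v) - g) v, norm_nonneg v]
  have h10 : φ 1 ≤ φ 0 := hanti (Set.mem_Ici.2 le_rfl) (Set.mem_Ici.2 zero_le_one) zero_le_one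
  simp only [φ, one_smul, zero_smul, add_zero, one_mul, one_pow, mul_one, zero_mul, mul_zero,
    sub_zero, zero_pow two_ne_zero] at h10
  linarith

theorem apply_sub_inner_gradient_smul_le (hf : Differentiable ℝ f) (hL : 0 < L)
    (hlip : ∀ z, ‖gradient f z - gradient f x‖ ≤ L * ‖z - x‖) {e : F} (he : ‖e‖ = 1) :
    f (x - ((1 / L) * inner ℝ (gradient f x) e) • e) ≤
      f x - inner ℝ (gradient f x) e ^ 2 / (2 * L) := by
  have := le_add_inner_gradient_add_sq hf hlip (-(((1 / L) * inner ℝ (gradient f x) e) • e))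
  rw [← sub_eq_add_neg, inner_neg_right, real_inner_smul_right, norm_neg, norm_smul, he, mul_one,
    Real.norm_eq_abs, sq_abs] at this
  convert this using 1
  field_simp
  ring

end Descent

section Sphere

variable {E : Type*} [NormedAddCommGroup E] [InnerProductSpace ℝ E] [MeasurableSpace E]
  [BorelSpace E] {μ : Measure E}

theorem integral_comp_inner_eq_of_norm_eq (hinv : ∀ T : E ≃ₗᵢ[ℝ] E, μ.map T = μ) (φ : ℝ → ℝ)
    {u w : E} (huw : ‖u‖ = ‖w‖) :
    ∫ e, φ (inner ℝ u e) ∂μ = ∫ e, φ (inner ℝ w e) ∂μ := by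
  let R := reflection (ℝ ∙ (u - w))ᗮ
  calc ∫ e, φ (inner ℝ u e) ∂μ = ∫ e, φ (inner ℝ w (R e)) ∂μ := by
        simp only [R, ← R.inner_map_map u, reflection_sub huw]
    _ = ∫ e, φ (inner ℝ w e) ∂μ :=
        MeasurePreserving.integral_comp ⟨R.continuous.measurable, hinv R⟩
          R.toHomeomorph.measurableEmbedding fun e ↦ φ (inner ℝ w e)

theorem finrank_mul_integral_inner_sq [FiniteDimensional ℝ E] [IsProbabilityMeasure μ]
    (hμ : ∀ᵐ e ∂μ, e ∈ Metric.sphere (0 : E) 1) (hinv : ∀ T : E ≃ₗᵢ[ℝ] E, μ.map T = μ) (g : E) :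
    Module.finrank ℝ E * ∫ e, inner ℝ g e ^ 2 ∂μ = ‖g‖ ^ 2 := by
  let b := stdOrthonormalBasis ℝ E
  have hint (v : E) : Integrable (fun e ↦ inner ℝ v e ^ 2) μ :=
    (by fun_prop : Continuous fun e ↦ inner ℝ v e ^ 2).integrable_of_ae_mem_isCompact
      (isCompact_sphere 0 1) hμ
  have hsphere : (fun e ↦ ‖g‖ ^ 2 * ‖e‖ ^ 2) =ᵐ[μ] fun _ ↦ ‖g‖ ^ 2 :=
    hμ.mono fun e he ↦ by simp [mem_sphere_zero_iff_norm.1 he]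
  calc Module.finrank ℝ E * ∫ e, inner ℝ g e ^ 2 ∂μ
      = ∑ i, ∫ e, inner ℝ (‖g‖ • b i) e ^ 2 ∂μ := by
        rw [Finset.sum_congr rfl fun i _ ↦ integral_comp_inner_eq_of_norm_eq hinv (· ^ 2)
          (u := ‖g‖ • b i) (w := g) (by simp [norm_smul, b.orthonormal.1 i])]
        simp
    _ = ∫ e, ‖g‖ ^ 2 * ‖e‖ ^ 2 ∂μ := by
        rw [← integral_finsetSum _ fun i _ ↦ hint _]
        simp_rw [real_inner_smul_left, mul_pow, ← Finset.mul_sum, b.sum_sq_inner_right]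
    _ = ‖g‖ ^ 2 := by simp [integral_congr_ae hsphere]

end Sphere

theorem grad_norm_sq_le_expectation_progress_general (n : ℕ)
    (μ : Measure (EuclideanSpace ℝ (Fin n))) [IsProbabilityMeasure μ]
    (hsupp : μ (Metric.sphere (0 : EuclideanSpace ℝ (Fin n)) 1)ᶜ = 0)
    (hinv : ∀ T : EuclideanSpace ℝ (Fin n) ≃ₗᵢ[ℝ] EuclideanSpace ℝ (Fin n),
      Measure.map T μ = μ)
    (f : EuclideanSpace ℝ (Fin n) → ℝ) (hf : Differentiable ℝ f)
    (L : ℝ) (hL : 0 < L)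
    (hlip : ∀ u v, ‖gradient f u - gradient f v‖ ≤ L * ‖u - v‖)
    (x : EuclideanSpace ℝ (Fin n)) :
    ‖gradient f x‖ ^ 2 ≤
      2 * n * L *
        (f x - ∫ e, f (x - ((1 / L) * (inner ℝ (gradient f x) e : ℝ)) • e) ∂μ) := by
  set g := gradient f x
  have hsphere : ∀ᵐ e ∂μ, e ∈ Metric.sphere 0 1 := mem_ae_iff.2 hsupp
  have hint {h : EuclideanSpace ℝ (Fin n) → ℝ} (hh : Continuous h) : Integrable h μ :=
    hh.integrable_of_ae_mem_isCompact (isCompact_sphere 0 1) hsphere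
  have hfc := hf.continuous
  have hstep : ∫ e, f (x - ((1 / L) * inner ℝ g e) • e) ∂μ ≤
      ∫ e, (f x - inner ℝ g e ^ 2 / (2 * L)) ∂μ :=
    integral_mono_ae (hint (by fun_prop)) (hint (by fun_prop)) <| hsphere.mono fun e he ↦
      apply_sub_inner_gradient_smul_le hf hL (fun z ↦ hlip z x) (mem_sphere_zero_iff_norm.1 he)
  rw [integral_sub (integrable_const _) (hint (by fun_prop)), integral_const, probReal_univ,
    one_smul, integral_div] at hstep
  have hmoment := finrank_mul_integral_inner_sq hsphere hinv g
  rw [finrank_euclideanSpace_fin] at hmoment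
  calc ‖g‖ ^ 2 = 2 * n * L * ((∫ e, inner ℝ g e ^ 2 ∂μ) / (2 * L)) := by
        rw [← hmoment]; field_simp
    _ ≤ _ := by gcongr; linarith

/-- For `e` uniform on the unit sphere and `y = x − (1/L)⟨∇f(x),e⟩e`,
`‖∇f(x)‖₂² ≤ 2nL·(f(x) − E_e[f(y)])`. -/
theorem grad_norm_sq_le_expectation_progress (n : ℕ) (hn : 1 ≤ n)
    (μ : Measure (EuclideanSpace ℝ (Fin n))) [IsProbabilityMeasure μ]
    (hsupp : μ (Metric.sphere (0 : EuclideanSpace ℝ (Fin n)) 1)ᶜ = 0)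
    (hinv : ∀ T : EuclideanSpace ℝ (Fin n) ≃ₗᵢ[ℝ] EuclideanSpace ℝ (Fin n),
      Measure.map T μ = μ)
    (f : EuclideanSpace ℝ (Fin n) → ℝ) (hf : Differentiable ℝ f)
    (L : ℝ) (hL : 0 < L)
    (hlip : ∀ u v, ‖gradient f u - gradient f v‖ ≤ L * ‖u - v‖)
    (x : EuclideanSpace ℝ (Fin n)) :
    ‖gradient f x‖ ^ 2 ≤
      2 * n * L *
        (f x - ∫ e, f (x - ((1 / L) * (inner ℝ (gradient f x) e : ℝ)) • e) ∂μ) :=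
  grad_norm_sq_le_expectation_progress_general n μ hsupp hinv f hf L hL hlip x
end

section
/- Let d : R^n → R be differentiable, V_z(y) its Bregman divergence, h ∈ R^n, α > 0, and suppose z⁺ = argmin_{y∈R^n}{α⟨h, y − z⟩ + V_z(y)} exists. Then for every u ∈ R^n: α⟨h, z − u⟩ ≤ α⟨h, z − z⁺⟩ + V_z(u) − V_{z⁺}(u) − V_z(z⁺). -/
/-!
Three-point identity: `V_z(u) - V_{z⁺}(u) - V_z(z⁺) = ⟪∇d(z⁺) - ∇d(z), u - z⁺⟫`, and
`∇d(z⁺) - ∇d(z)` is exactly the gradient of `V_z` at `z⁺`. So the optimality condition tested at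
`u` says `0 ≤ V_z(u) - V_{z⁺}(u) - V_z(z⁺) + α⟪h, u - z⁺⟫`, which is the claim after splitting
`z - u = (z - z⁺) - (u - z⁺)`.
-/

open InnerProductSpace
open scoped Gradient

section Bregman

variable {E : Type*} [NormedAddCommGroup E] [InnerProductSpace ℝ E] [CompleteSpace E]

noncomputable def bregmanDiv (d : E → ℝ) (z y : E) : ℝ :=
  d y - d z - ⟪∇ d z, y - z⟫_ℝ

theorem bregmanDiv_three_point (d : E → ℝ) (z x u : E) :
    bregmanDiv d z u - bregmanDiv d x u - bregmanDiv d z x = ⟪∇ d x - ∇ d z, u - x⟫_ℝ := by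
  simp only [bregmanDiv, inner_sub_left, inner_sub_right]
  ring

theorem hasGradientAt_bregmanDiv {d : E → ℝ} {x : E} (hd : DifferentiableAt ℝ d x) (z : E) :
    HasGradientAt (bregmanDiv d z) (∇ d x - ∇ d z) x := by
  rw [hasGradientAt_iff_hasFDerivAt, map_sub, toDual_gradient]
  have hlin : HasFDerivAt (fun y => ⟪∇ d z, y - z⟫_ℝ) (toDual ℝ E (∇ d z)) x := by
    simpa only [Function.comp_def, toDual_apply_apply, ContinuousLinearMap.comp_id] using
      (toDual ℝ E (∇ d z)).hasFDerivAt.comp x (hasFDerivAt_sub_const z)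
  exact (hd.hasFDerivAt.sub_const (d z)).sub hlin

theorem inner_le_of_bregman_prox_optimality {d : E → ℝ} {h z zp : E} {α : ℝ}
    (hd : DifferentiableAt ℝ d zp) (hopt : ∀ u, 0 ≤ ⟪∇ (bregmanDiv d z) zp + α • h, u - zp⟫_ℝ)
    (u : E) :
    α * ⟪h, z - u⟫_ℝ ≤
      α * ⟪h, z - zp⟫_ℝ + bregmanDiv d z u - bregmanDiv d zp u - bregmanDiv d z zp := by
  have key := hopt u
  rw [(hasGradientAt_bregmanDiv hd z).gradient, inner_add_left, real_inner_smul_left,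
    ← bregmanDiv_three_point] at key
  have hsplit : ⟪h, z - u⟫_ℝ = ⟪h, z - zp⟫_ℝ - ⟪h, u - zp⟫_ℝ := by
    rw [← inner_sub_right, sub_sub_sub_cancel_right]
  rw [hsplit]
  linarith

end Bregman

theorem mirror_step_inequality_general (n : ℕ)
    (d : EuclideanSpace ℝ (Fin n) → ℝ) (hd : Differentiable ℝ d)
    (V : EuclideanSpace ℝ (Fin n) → EuclideanSpace ℝ (Fin n) → ℝ)
    (hV : ∀ z y, V z y = d y - d z - (inner ℝ (gradient d z) (y - z) : ℝ))
    (h : EuclideanSpace ℝ (Fin n)) (α : ℝ)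
    (z zp : EuclideanSpace ℝ (Fin n))
    (hopt : ∀ u, 0 ≤ (inner ℝ (gradient (V z) zp + α • h) (u - zp) : ℝ)) :
    ∀ u, α * (inner ℝ h (z - u) : ℝ) ≤
      α * (inner ℝ h (z - zp) : ℝ) + V z u - V zp u - V z zp := by
  obtain rfl : V = bregmanDiv d := funext fun z => funext (hV z)
  exact inner_le_of_bregman_prox_optimality (hd zp) hopt

/-- Mirror-descent step inequality: if `z⁺` minimizes `y ↦ α⟨h,y−z⟩ + V_z(y)` (expressed via
the first-order optimality condition), then for every `u`,
`α⟨h, z−u⟩ ≤ α⟨h, z−z⁺⟩ + V_z(u) − V_{z⁺}(u) − V_z(z⁺)`. -/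
theorem mirror_step_inequality (n : ℕ)
    (d : EuclideanSpace ℝ (Fin n) → ℝ) (hd : Differentiable ℝ d)
    (hconv : ConvexOn ℝ Set.univ d)
    (V : EuclideanSpace ℝ (Fin n) → EuclideanSpace ℝ (Fin n) → ℝ)
    (hV : ∀ z y, V z y = d y - d z - (inner ℝ (gradient d z) (y - z) : ℝ))
    (h : EuclideanSpace ℝ (Fin n)) (α : ℝ) (hα : 0 < α)
    (z zp : EuclideanSpace ℝ (Fin n))
    (hopt : ∀ u, 0 ≤ (inner ℝ (gradient (V z) zp + α • h) (u - zp) : ℝ)) :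
    ∀ u, α * (inner ℝ h (z - u) : ℝ) ≤
      α * (inner ℝ h (z - zp) : ℝ) + V z u - V zp u - V z zp :=
  mirror_step_inequality_general n d hd V hV h α z zp hopt
end

section
/- If e is uniformly distributed on the unit Euclidean sphere in R^n with n ≥ 8 and 2 ≤ q ≤ ∞, then E[‖e‖_q²] ≤ min{q − 1, 16 ln n − 8}·n^{2/q − 1}. -/
open MeasureTheory
open scoped ENNReal

/-- The `ℓ_r` (Hölder) norm of a vector of `EuclideanSpace ℝ (Fin n)`, for `r : ℝ≥0∞`. -/
noncomputable def lpNorm (n : ℕ) (r : ℝ≥0∞) (v : EuclideanSpace ℝ (Fin n)) : ℝ :=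
  ‖(WithLp.equiv r (Fin n → ℝ)).symm (fun i => v i)‖

/-!
Rotation invariance makes `√n e_i` equidistributed with `⟪ε, e⟫` for every sign vector
`ε ∈ {±1}ⁿ`. Averaging over the `2ⁿ` sign vectors and applying Khintchine's inequality to
`∑ e_j² = 1` bounds the moments `E[e_i^{2k}] ≤ (2k-1)‼ / n^k` by those of a centred Gaussian
of variance `1/n`. Hölder interpolation between consecutive even moments gives
`E|e_i|^p ≤ ((p-1)/n)^{p/2}`, and Jensen for the concave map `t ↦ t^{2/p}` gives
`E‖e‖_p² ≤ (E ∑ |e_i|^p)^{2/p} ≤ (p-1) n^{2/p-1}`. For `q ≥ 4 ln n` one bounds `‖e‖_q` by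
`‖e‖_{4 ln n}` instead, for which `n^{2/(4 ln n)} = √e ≤ 2`.
-/

open Finset
open scoped Nat RealInnerProductSpace

namespace Nat

theorem two_pow_mul_factorial_mul_doubleFactorial (m : ℕ) :
    2 ^ m * m ! * (2 * m - 1)‼ = (2 * m)! := by
  cases m with
  | zero => rfl
  | succ m =>
    rw [show 2 * (m + 1) - 1 = 2 * m + 1 by omega, show 2 * (m + 1) = 2 * m + 1 + 1 by ring,
      factorial_eq_mul_doubleFactorial (2 * m + 1), show 2 * m + 1 + 1 = 2 * (m + 1) by ring,
      doubleFactorial_two_mul]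

theorem choose_mul_doubleFactorial_le {m j : ℕ} (h : j ≤ m) :
    (2 * m).choose (2 * j) * (2 * j - 1)‼ ≤ (2 * m - 1)‼ * m.choose j := by
  refine Nat.le_of_mul_le_mul_right (c := 2 ^ m * (j ! * (m - j)!)) ?_ (by positivity)
  have hm : 2 ^ m = 2 ^ j * 2 ^ (m - j) := by rw [← pow_add, Nat.add_sub_cancel' h]
  calc (2 * m).choose (2 * j) * (2 * j - 1)‼ * (2 ^ m * (j ! * (m - j)!))
      = (2 * m).choose (2 * j) * (2 ^ j * j ! * (2 * j - 1)‼) * (2 ^ (m - j) * (m - j)!) := by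
        rw [hm]; ring
    _ ≤ (2 * m).choose (2 * j) * (2 * j)! * (2 * m - 2 * j)! := by
        rw [two_pow_mul_factorial_mul_doubleFactorial, show 2 * m - 2 * j = 2 * (m - j) by omega]
        exact Nat.mul_le_mul_left _ (two_pow_mul_factorial_le_factorial_two_mul _)
    _ = (2 * m - 1)‼ * m.choose j * (2 ^ m * (j ! * (m - j)!)) := by
        rw [choose_mul_factorial_mul_factorial (by omega),
          ← two_pow_mul_factorial_mul_doubleFactorial, ← choose_mul_factorial_mul_factorial h]
        ring

theorem doubleFactorial_two_mul_add_one_le_pow (j : ℕ) : (2 * j + 1)‼ ≤ (2 * j + 1) ^ j := by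
  induction j with
  | zero => rfl
  | succ j ih =>
    rw [show 2 * (j + 1) + 1 = 2 * j + 1 + 2 by ring, doubleFactorial_add_two, pow_succ']
    exact Nat.mul_le_mul_left _ (ih.trans (Nat.pow_le_pow_left (by omega) j))

end Nat

theorem Finset.sum_range_two_mul_add_one {M : Type*} [AddCommMonoid M] (f : ℕ → M) (m : ℕ) :
    ∑ k ∈ range (2 * m + 1), f k =
      ∑ l ∈ range (m + 1), f (2 * l) + ∑ l ∈ range m, f (2 * l + 1) := by
  induction m with
  | zero => simp
  | succ m ih =>
    rw [show 2 * (m + 1) + 1 = 2 * m + 1 + 1 + 1 by ring, sum_range_succ, sum_range_succ, ih,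
      sum_range_succ (fun l => f (2 * l)) (m + 1), sum_range_succ (fun l => f (2 * l + 1)) m,
      show 2 * (m + 1) = 2 * m + 1 + 1 by ring]
    abel

theorem add_pow_two_mul_add_sub_pow_two_mul (x c : ℝ) (m : ℕ) :
    (x + c) ^ (2 * m) + (x - c) ^ (2 * m) =
      ∑ l ∈ range (m + 1), 2 * (2 * m).choose (2 * l) * x ^ (2 * l) * c ^ (2 * (m - l)) := by
  rw [sub_eq_add_neg, add_pow, add_pow, ← sum_add_distrib, sum_range_two_mul_add_one]
  have hodd : ∀ l ∈ range m,
      x ^ (2 * l + 1) * c ^ (2 * m - (2 * l + 1)) * (2 * m).choose (2 * l + 1) +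
        x ^ (2 * l + 1) * (-c) ^ (2 * m - (2 * l + 1)) * (2 * m).choose (2 * l + 1) = 0 := by
    intro l hl
    have : Odd (2 * m - (2 * l + 1)) := ⟨m - l - 1, by have := mem_range.1 hl; omega⟩
    rw [this.neg_pow]; ring
  rw [sum_eq_zero hodd, add_zero]
  refine sum_congr rfl fun l hl => ?_
  rw [show 2 * m - 2 * l = 2 * (m - l) by have := mem_range.1 hl; omega,
    (even_two_mul _).neg_pow]
  ring

def signVec {ι : Type*} [DecidableEq ι] (s : Finset ι) (i : ι) : ℝ := if i ∈ s then -1 else 1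

theorem sum_insert_signVec_pow_add_pow {ι : Type*} [DecidableEq ι] {A s : Finset ι} {j : ι}
    (hj : j ∉ A) (hs : s ⊆ A) (a : ι → ℝ) (m : ℕ) :
    (∑ i ∈ insert j A, signVec s i * a i) ^ (2 * m) +
        (∑ i ∈ insert j A, signVec (insert j s) i * a i) ^ (2 * m) =
      ∑ l ∈ range (m + 1), 2 * (2 * m).choose (2 * l) * a j ^ (2 * (m - l)) *
        (∑ i ∈ A, signVec s i * a i) ^ (2 * l) := by
  have hA : ∑ i ∈ A, signVec (insert j s) i * a i = ∑ i ∈ A, signVec s i * a i :=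
    sum_congr rfl fun i hi => by simp [signVec, show i ≠ j by rintro rfl; exact hj hi]
  have hsj : signVec s j = 1 := if_neg fun h => hj (hs h)
  have hsj' : signVec (insert j s) j = -1 := if_pos (mem_insert_self j s)
  rw [sum_insert hj, sum_insert hj, hA, hsj, hsj', one_mul, neg_one_mul, neg_add_eq_sub,
    add_comm (a j), add_pow_two_mul_add_sub_pow_two_mul]
  exact sum_congr rfl fun l _ => by ring

theorem khintchine_moment_le {ι : Type*} [DecidableEq ι] (A : Finset ι) (a : ι → ℝ) (m : ℕ) :
    ∑ s ∈ A.powerset, (∑ i ∈ A, signVec s i * a i) ^ (2 * m) ≤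
      2 ^ #A * (2 * m - 1)‼ * (∑ i ∈ A, a i ^ 2) ^ m := by
  induction A using Finset.induction generalizing m with
  | empty => cases m <;> simp
  | @insert j A hj ih =>
    set S := ∑ i ∈ A, a i ^ 2
    rw [sum_powerset_insert hj, ← sum_add_distrib, sum_congr rfl fun s hs =>
      sum_insert_signVec_pow_add_pow hj (mem_powerset.1 hs) a m, sum_comm]
    calc ∑ l ∈ range (m + 1), ∑ s ∈ A.powerset, 2 * ((2 * m).choose (2 * l) : ℝ) *
          a j ^ (2 * (m - l)) * (∑ i ∈ A, signVec s i * a i) ^ (2 * l)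
        ≤ ∑ l ∈ range (m + 1), 2 * ((2 * m).choose (2 * l) : ℝ) * a j ^ (2 * (m - l)) *
          (2 ^ #A * (2 * l - 1)‼ * S ^ l) := by
          refine sum_le_sum fun l _ => ?_
          rw [← mul_sum]
          have := (even_two_mul (m - l)).pow_nonneg (a j)
          exact mul_le_mul_of_nonneg_left (ih l) (by positivity)
      _ ≤ ∑ l ∈ range (m + 1), 2 ^ (#A + 1) * ((2 * m - 1)‼ * m.choose l : ℕ) *
          (S ^ l * (a j ^ 2) ^ (m - l)) := by
          refine sum_le_sum fun l hl => ?_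
          have hcomb : ((2 * m).choose (2 * l) : ℝ) * (2 * l - 1)‼ ≤
              (2 * m - 1)‼ * m.choose l := by
            exact_mod_cast Nat.choose_mul_doubleFactorial_le (Nat.lt_succ_iff.1 (mem_range.1 hl))
          calc 2 * ((2 * m).choose (2 * l) : ℝ) * a j ^ (2 * (m - l)) *
                (2 ^ #A * (2 * l - 1)‼ * S ^ l)
              = 2 ^ (#A + 1) * (((2 * m).choose (2 * l) : ℝ) * (2 * l - 1)‼) *
                  (S ^ l * (a j ^ 2) ^ (m - l)) := by rw [← pow_mul]; ring
            _ ≤ _ := by push_cast; gcongr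
      _ = 2 ^ #(insert j A) * (2 * m - 1)‼ * (∑ i ∈ insert j A, a i ^ 2) ^ m := by
          rw [card_insert_of_notMem hj, sum_insert hj, add_comm (a j ^ 2), add_pow, mul_sum]
          exact sum_congr rfl fun l _ => by push_cast; ring

theorem rpow_mul_add_two_rpow_le {a j t : ℝ} (ha : 1 ≤ a) (hj : 0 ≤ j) (ht0 : 0 ≤ t)
    (ht1 : t ≤ 1) : a ^ j * (a + 2) ^ t ≤ (a + 2 * t) ^ (j + 1 + t) := by
  have ha0 : 0 < a := by linarith
  have hamgm : a ^ (1 - t) * (a + 2) ^ t ≤ a + 2 * t := by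
    have := Real.geom_mean_le_arith_mean2_weighted (sub_nonneg.2 ht1) ht0 ha0.le
      (by linarith : 0 ≤ a + 2) (by ring)
    linarith
  calc a ^ j * (a + 2) ^ t = a ^ (j + t - 1) * (a ^ (1 - t) * (a + 2) ^ t) := by
        rw [← mul_assoc, ← Real.rpow_add ha0]; ring_nf
    _ ≤ (a + 2 * t) ^ (j + t) * (a + 2 * t) := by
        gcongr
        calc a ^ (j + t - 1) ≤ a ^ (j + t) := Real.rpow_le_rpow_of_exponent_le ha (by linarith)
          _ ≤ (a + 2 * t) ^ (j + t) := by gcongr; linarith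
    _ = (a + 2 * t) ^ (j + 1 + t) := by
        rw [← Real.rpow_add_one (by positivity)]; ring_nf

theorem doubleFactorial_rpow_mul_rpow_le (j : ℕ) {t v : ℝ} (ht0 : 0 ≤ t) (ht1 : t ≤ 1)
    (hv : 0 ≤ v) :
    ((2 * j + 1)‼ * v ^ (j + 1) : ℝ) ^ (1 - t) * ((2 * j + 3)‼ * v ^ (j + 2) : ℝ) ^ t ≤
      ((2 * j + 1 + 2 * t) * v) ^ (j + 1 + t) := by
  have hD : ((2 * j + 3)‼ : ℝ) = (2 * j + 1 + 2) * (2 * j + 1)‼ := by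
    rw [show 2 * j + 3 = 2 * j + 1 + 2 by ring, Nat.doubleFactorial_add_two]; push_cast; ring
  have hD_le : ((2 * j + 1)‼ : ℝ) ≤ (2 * j + 1) ^ (j : ℝ) := by
    rw [Real.rpow_natCast]; exact_mod_cast Nat.doubleFactorial_two_mul_add_one_le_pow j
  have hD0 : (0 : ℝ) < (2 * j + 1)‼ := by exact_mod_cast Nat.doubleFactorial_pos _
  have hDD : ((2 * j + 1)‼ : ℝ) ^ (1 - t) * ((2 * j + 1)‼ : ℝ) ^ t = (2 * j + 1)‼ := by
    rw [← Real.rpow_add hD0]; simp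
  have hv_pow : (v ^ (j + 1)) ^ (1 - t) * (v ^ (j + 2)) ^ t = v ^ ((j : ℝ) + 1 + t) := by
    rw [← Real.rpow_natCast, ← Real.rpow_natCast, ← Real.rpow_mul hv, ← Real.rpow_mul hv,
      ← Real.rpow_add' hv (by push_cast; nlinarith)]
    push_cast; ring_nf
  calc ((2 * j + 1)‼ * v ^ (j + 1) : ℝ) ^ (1 - t) * ((2 * j + 3)‼ * v ^ (j + 2) : ℝ) ^ t
      = (((2 * j + 1)‼ : ℝ) ^ (1 - t) * ((2 * j + 1)‼ : ℝ) ^ t) * (2 * j + 1 + 2 : ℝ) ^ t *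
          ((v ^ (j + 1)) ^ (1 - t) * (v ^ (j + 2)) ^ t) := by
        rw [hD, Real.mul_rpow (by positivity) (by positivity), Real.mul_rpow (by positivity)
          (by positivity), Real.mul_rpow (by positivity) hD0.le]
        ring
    _ = (2 * j + 1)‼ * (2 * j + 1 + 2 : ℝ) ^ t * v ^ ((j : ℝ) + 1 + t) := by rw [hDD, hv_pow]
    _ ≤ (2 * j + 1) ^ (j : ℝ) * (2 * j + 1 + 2 : ℝ) ^ t * v ^ ((j : ℝ) + 1 + t) := by gcongr
    _ ≤ (2 * j + 1 + 2 * t) ^ ((j : ℝ) + 1 + t) * v ^ ((j : ℝ) + 1 + t) := by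
        gcongr
        exact rpow_mul_add_two_rpow_le (by linarith [j.cast_nonneg (α := ℝ)]) j.cast_nonneg
          ht0 ht1
    _ = ((2 * j + 1 + 2 * t) * v) ^ ((j : ℝ) + 1 + t) := (Real.mul_rpow (by positivity) hv).symm

section Lintegral

variable {α : Type*} [MeasurableSpace α] {μ : Measure α}

theorem lintegral_rpow_le_rpow_mul_rpow {f : α → ℝ≥0∞} (hf : AEMeasurable f μ) {a b t : ℝ}
    (ha : 0 ≤ a) (hb : 0 ≤ b) (ht0 : 0 ≤ t) (ht1 : t ≤ 1) :
    ∫⁻ x, f x ^ ((1 - t) * a + t * b) ∂μ ≤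
      (∫⁻ x, f x ^ a ∂μ) ^ (1 - t) * (∫⁻ x, f x ^ b ∂μ) ^ t := by
  calc ∫⁻ x, f x ^ ((1 - t) * a + t * b) ∂μ
      = ∫⁻ x, (f x ^ a) ^ (1 - t) * (f x ^ b) ^ t ∂μ := by
        congr with x
        rw [← ENNReal.rpow_mul, ← ENNReal.rpow_mul, ← ENNReal.rpow_add_of_nonneg _ _
          (mul_nonneg ha (by linarith)) (mul_nonneg hb ht0), mul_comm a, mul_comm b]
    _ ≤ _ := ENNReal.lintegral_mul_norm_pow_le (hf.pow_const a) (hf.pow_const b)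
        (by linarith) ht0 (by ring)

theorem lintegral_rpow_le_rpow_lintegral [IsProbabilityMeasure μ] {f : α → ℝ≥0∞}
    (hf : AEMeasurable f μ) {t : ℝ} (ht0 : 0 ≤ t) (ht1 : t ≤ 1) :
    ∫⁻ x, f x ^ t ∂μ ≤ (∫⁻ x, f x ∂μ) ^ t := by
  simpa using lintegral_rpow_le_rpow_mul_rpow hf le_rfl zero_le_one ht0 ht1

theorem lintegral_enorm_rpow_le_of_moment_le {f : α → ℝ} (hf : AEMeasurable f μ) {v : ℝ}
    (hv : 0 ≤ v)
    (hmom : ∀ m : ℕ, ∫⁻ x, ‖f x‖ₑ ^ (2 * m) ∂μ ≤ ENNReal.ofReal ((2 * m - 1)‼ * v ^ m))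
    {p : ℝ} (hp : 2 ≤ p) :
    ∫⁻ x, ‖f x‖ₑ ^ p ∂μ ≤ ENNReal.ofReal (((p - 1) * v) ^ (p / 2)) := by
  set j := ⌊p / 2 - 1⌋₊
  set t := p / 2 - 1 - j with ht
  have ht0 : 0 ≤ t := sub_nonneg.2 (Nat.floor_le (by linarith))
  have ht1 : t ≤ 1 := by
    have : p / 2 - 1 < j + 1 := Nat.lt_floor_add_one _
    linarith
  have hmom' (k : ℕ) : ∫⁻ x, ‖f x‖ₑ ^ ((2 * k : ℕ) : ℝ) ∂μ ≤
      ENNReal.ofReal ((2 * k - 1)‼ * v ^ k) := by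
    simpa only [ENNReal.rpow_natCast] using hmom k
  have hp_eq : p = (1 - t) * ((2 * (j + 1) : ℕ) : ℝ) + t * ((2 * (j + 2) : ℕ) : ℝ) := by
    push_cast; ring
  calc ∫⁻ x, ‖f x‖ₑ ^ p ∂μ
      ≤ (∫⁻ x, ‖f x‖ₑ ^ ((2 * (j + 1) : ℕ) : ℝ) ∂μ) ^ (1 - t) *
          (∫⁻ x, ‖f x‖ₑ ^ ((2 * (j + 2) : ℕ) : ℝ) ∂μ) ^ t := by
        rw [hp_eq]
        exact lintegral_rpow_le_rpow_mul_rpow hf.enorm (by positivity) (by positivity) ht0 ht1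
    _ ≤ ENNReal.ofReal ((2 * j + 1)‼ * v ^ (j + 1)) ^ (1 - t) *
          ENNReal.ofReal ((2 * j + 3)‼ * v ^ (j + 2)) ^ t := by
        gcongr
        · simpa [show 2 * (j + 1) - 1 = 2 * j + 1 by omega] using hmom' (j + 1)
        · simpa [show 2 * (j + 2) - 1 = 2 * j + 3 by omega] using hmom' (j + 2)
    _ ≤ ENNReal.ofReal (((p - 1) * v) ^ (p / 2)) := by
        rw [ENNReal.ofReal_rpow_of_nonneg (by positivity) (by linarith),
          ENNReal.ofReal_rpow_of_nonneg (by positivity) ht0, ← ENNReal.ofReal_mul (by positivity)]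
        refine ENNReal.ofReal_le_ofReal
          ((doubleFactorial_rpow_mul_rpow_le j ht0 ht1 hv).trans_eq ?_)
        congr 2 <;> ring

theorem integral_le_of_lintegral_ofReal_le {f : α → ℝ} (hf : 0 ≤ f) {b : ℝ} (hb : 0 ≤ b)
    (h : ∫⁻ x, ENNReal.ofReal (f x) ∂μ ≤ ENNReal.ofReal b) : ∫ x, f x ∂μ ≤ b :=
  calc ∫ x, f x ∂μ ≤ ‖∫ x, f x ∂μ‖ := Real.le_norm_self _
    _ ≤ (∫⁻ x, ENNReal.ofReal ‖f x‖ ∂μ).toReal := norm_integral_le_lintegral_norm f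
    _ ≤ b := by simp_rw [Real.norm_of_nonneg (hf _)]; exact ENNReal.toReal_le_of_le_ofReal hb h

end Lintegral

theorem four_log_sub_one_mul_rpow_le {n : ℕ} (hL : 1 ≤ Real.log n) {x : ℝ} (hx : 0 ≤ x) :
    (4 * Real.log n - 1) * (n : ℝ) ^ (2 / (4 * Real.log n) - 1) ≤
      (16 * Real.log n - 8) * (n : ℝ) ^ (x - 1) := by
  set L := Real.log n
  have hn1 : (1 : ℝ) ≤ n := by
    by_contra h
    linarith [Real.log_nonpos (Nat.cast_nonneg n) (not_le.1 h).le]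
  have hn0 : (0 : ℝ) < n := by linarith
  have hexp : (n : ℝ) ^ (2 / (4 * L)) ≤ 2 := by
    rw [Real.rpow_def_of_pos hn0, show L * (2 / (4 * L)) = 1 / 2 by field_simp; ring,
      ← Real.le_log_iff_exp_le two_pos]
    linarith [Real.log_two_gt_d9]
  rw [Real.rpow_sub_one hn0.ne']
  calc (4 * L - 1) * ((n : ℝ) ^ (2 / (4 * L)) / n) ≤ (4 * L - 1) * (2 / n) := by
        gcongr; linarith
    _ ≤ (16 * L - 8) * (n : ℝ) ^ (-1 : ℝ) := by
        rw [Real.rpow_neg_one, ← div_eq_mul_inv, mul_div_assoc']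
        gcongr; linarith
    _ ≤ (16 * L - 8) * (n : ℝ) ^ (x - 1) :=
        mul_le_mul_of_nonneg_left (Real.rpow_le_rpow_of_exponent_le hn1 (by linarith))
          (by linarith)

theorem PiLp.norm_le_norm_of_exponent_le {ι : Type*} [Fintype ι] {β : ι → Type*}
    [∀ i, SeminormedAddCommGroup (β i)] {p q : ℝ≥0∞} [Fact (1 ≤ p)] (hpq : p ≤ q)
    (f : ∀ i, β i) : ‖WithLp.toLp q f‖ ≤ ‖WithLp.toLp p f‖ := by
  set C := ‖WithLp.toLp p f‖ with hC_def
  have hcoord (i : ι) : ‖f i‖ ≤ C := PiLp.norm_apply_le (WithLp.toLp p f) i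
  rcases eq_or_ne q ∞ with rfl | hq
  · exact (PiLp.norm_eq_ciSup _).trans_le (Real.iSup_le hcoord (norm_nonneg _))
  set r := p.toReal
  set s := q.toReal
  have hr : 1 ≤ r := by
    simpa using ENNReal.toReal_mono (ne_top_of_le_ne_top hq hpq) (Fact.out : 1 ≤ p)
  have hrs : r ≤ s := ENNReal.toReal_mono hq hpq
  have hC : C ^ r = ∑ i, ‖f i‖ ^ r := by
    rw [hC_def, PiLp.norm_eq_sum (by positivity), ← Real.rpow_mul (by positivity),
      one_div_mul_cancel (by positivity), Real.rpow_one]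
  have hsplit (x : ℝ) (hx : 0 ≤ x) : x ^ s = x ^ (s - r) * x ^ r := by
    rw [← Real.rpow_add' hx (by linarith)]; ring_nf
  have hsum : ∑ i, ‖f i‖ ^ s ≤ C ^ s :=
    calc ∑ i, ‖f i‖ ^ s = ∑ i, ‖f i‖ ^ (s - r) * ‖f i‖ ^ r :=
          sum_congr rfl fun i _ => hsplit _ (norm_nonneg _)
      _ ≤ ∑ i, C ^ (s - r) * ‖f i‖ ^ r := by
          gcongr with i
          exact hcoord i
      _ = C ^ s := by rw [← mul_sum, ← hC, hsplit C (norm_nonneg _)]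
  rw [PiLp.norm_eq_sum (by linarith), one_div]
  calc (∑ i, ‖(WithLp.toLp q f) i‖ ^ s) ^ s⁻¹ ≤ (C ^ s) ^ s⁻¹ := by gcongr
    _ = C := Real.rpow_rpow_inv (norm_nonneg _) (by linarith)

theorem lpNorm_le_lpNorm_of_le {n : ℕ} {r q : ℝ≥0∞} [Fact (1 ≤ r)] (h : r ≤ q)
    (v : EuclideanSpace ℝ (Fin n)) : lpNorm n q v ≤ lpNorm n r v :=
  PiLp.norm_le_norm_of_exponent_le h _

theorem ofReal_lpNorm_sq {n : ℕ} {p : ℝ} (hp : 0 < p) (v : EuclideanSpace ℝ (Fin n)) :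
    ENNReal.ofReal (lpNorm n (ENNReal.ofReal p) v ^ 2) = (∑ i, ‖v i‖ₑ ^ p) ^ (2 / p) := by
  have hS : 0 ≤ ∑ i, |v i| ^ p := by positivity
  rw [_root_.lpNorm, PiLp.norm_eq_sum (by rwa [ENNReal.toReal_ofReal hp.le]),
    ENNReal.toReal_ofReal hp.le, ← Real.rpow_natCast]
  simp only [WithLp.equiv_symm_apply, PiLp.toLp_apply, Real.norm_eq_abs]
  rw [← Real.rpow_mul hS, ← ENNReal.ofReal_rpow_of_nonneg hS (by positivity),
    ENNReal.ofReal_sum_of_nonneg (by intros; positivity)]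
  simp only [Real.enorm_eq_ofReal_abs, ENNReal.ofReal_rpow_of_nonneg (abs_nonneg _) hp.le]
  congr 1
  ring

theorem integral_comp_inner_eq_of_norm_eq_s15 {E : Type*} [NormedAddCommGroup E]
    [InnerProductSpace ℝ E] [MeasurableSpace E] [BorelSpace E] {μ : Measure E}
    (hinv : ∀ T : E ≃ₗᵢ[ℝ] E, μ.map T = μ) (g : ℝ → ℝ) {c c' : E} (h : ‖c‖ = ‖c'‖) :
    ∫ x, g ⟪c, x⟫ ∂μ = ∫ x, g ⟪c', x⟫ ∂μ := by
  set T := (ℝ ∙ (c - c'))ᗮ.reflection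
  have hT : T c = c' := Submodule.reflection_sub h
  calc ∫ x, g ⟪c, x⟫ ∂μ = ∫ x, g ⟪c', T x⟫ ∂μ := by simp_rw [← hT, T.inner_map_map]
    _ = ∫ y, g ⟪c', y⟫ ∂(μ.map T) :=
      (integral_map_equiv T.toHomeomorph.toMeasurableEquiv fun y => g ⟪c', y⟫).symm
    _ = ∫ x, g ⟪c', x⟫ ∂μ := by rw [hinv]

theorem Continuous.integrable_of_measure_compl_eq_zero {X : Type*} [TopologicalSpace X]
    [T2Space X] [MeasurableSpace X] [OpensMeasurableSpace X] {μ : Measure X} [IsFiniteMeasure μ]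
    {K : Set X} (hK : IsCompact K) (hμ : μ Kᶜ = 0) {f : X → ℝ} (hf : Continuous f) :
    Integrable f μ := by
  have := hf.continuousOn.integrableOn_compact (μ := μ) hK
  rwa [IntegrableOn, Measure.restrict_eq_self_of_ae_mem (mem_ae_iff.2 hμ)] at this

section Sphere

variable {n : ℕ} {μ : Measure (EuclideanSpace ℝ (Fin n))}

theorem ae_sum_sq_eq_one (hsupp : μ (Metric.sphere 0 1)ᶜ = 0) :
    ∀ᵐ x ∂μ, ∑ j, x j ^ 2 = 1 := by
  filter_upwards [mem_ae_iff.2 hsupp] with x hx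
  rw [← EuclideanSpace.real_norm_sq_eq, mem_sphere_zero_iff_norm.1 hx, one_pow]

variable [IsProbabilityMeasure μ]

theorem integral_coord_pow_two_mul_le (hn : 0 < n) (hsupp : μ (Metric.sphere 0 1)ᶜ = 0)
    (hinv : ∀ T : EuclideanSpace ℝ (Fin n) ≃ₗᵢ[ℝ] EuclideanSpace ℝ (Fin n), μ.map T = μ)
    (i : Fin n) (m : ℕ) :
    ∫ x, x i ^ (2 * m) ∂μ ≤ (2 * m - 1)‼ / n ^ m := by
  let ε (s : Finset (Fin n)) : EuclideanSpace ℝ (Fin n) := WithLp.toLp 2 (signVec s)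
  have hint (c : EuclideanSpace ℝ (Fin n)) : Integrable (fun x => ⟪c, x⟫ ^ (2 * m)) μ :=
    (continuous_const.inner continuous_id).pow _ |>.integrable_of_measure_compl_eq_zero
      (isCompact_sphere 0 1) hsupp
  have hnorm (s : Finset (Fin n)) : ‖ε s‖ = ‖EuclideanSpace.single i √(n : ℝ)‖ := by
    rw [PiLp.norm_single, EuclideanSpace.norm_eq]
    simp [ε, signVec, apply_ite, abs_of_nonneg (Real.sqrt_nonneg _)]
  have hsign (s : Finset (Fin n)) :
      ∫ x, ⟪ε s, x⟫ ^ (2 * m) ∂μ = n ^ m * ∫ x, x i ^ (2 * m) ∂μ := by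
    rw [integral_comp_inner_eq_of_norm_eq_s15 hinv (· ^ (2 * m)) (hnorm s), ← integral_const_mul]
    simp [EuclideanSpace.inner_single_left, mul_pow, pow_mul]
  have hbound : ∫ x, ∑ s ∈ univ.powerset, ⟪ε s, x⟫ ^ (2 * m) ∂μ ≤ 2 ^ n * (2 * m - 1)‼ := by
    calc ∫ x, ∑ s ∈ univ.powerset, ⟪ε s, x⟫ ^ (2 * m) ∂μ
        ≤ ∫ _, 2 ^ n * ((2 * m - 1)‼ : ℝ) ∂μ := integral_mono_ae
          (integrable_finsetSum _ fun s _ => hint (ε s)) (integrable_const _) ?_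
      _ = 2 ^ n * (2 * m - 1)‼ := by simp
    filter_upwards [ae_sum_sq_eq_one hsupp] with x hx
    simpa [ε, PiLp.inner_apply, hx, mul_comm] using khintchine_moment_le univ x m
  rw [integral_finsetSum _ fun s _ => hint (ε s), sum_congr rfl fun s _ => hsign s,
    sum_const, card_powerset, card_univ, Fintype.card_fin, nsmul_eq_mul] at hbound
  push_cast at hbound
  rw [le_div_iff₀ (by positivity), mul_comm]
  exact le_of_mul_le_mul_left hbound (by positivity)

theorem lintegral_enorm_coord_rpow_le (hn : 0 < n) (hsupp : μ (Metric.sphere 0 1)ᶜ = 0)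
    (hinv : ∀ T : EuclideanSpace ℝ (Fin n) ≃ₗᵢ[ℝ] EuclideanSpace ℝ (Fin n), μ.map T = μ)
    (i : Fin n) {p : ℝ} (hp : 2 ≤ p) :
    ∫⁻ x, ‖x i‖ₑ ^ p ∂μ ≤ ENNReal.ofReal (((p - 1) * (n : ℝ)⁻¹) ^ (p / 2)) := by
  refine lintegral_enorm_rpow_le_of_moment_le (by fun_prop) (by positivity) (fun m => ?_) hp
  have hint : Integrable (fun x : EuclideanSpace ℝ (Fin n) => x i ^ (2 * m)) μ :=
    (by fun_prop : Continuous fun x : EuclideanSpace ℝ (Fin n) => x i ^ (2 * m))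
      |>.integrable_of_measure_compl_eq_zero (isCompact_sphere 0 1) hsupp
  calc ∫⁻ x, ‖x i‖ₑ ^ (2 * m) ∂μ = ENNReal.ofReal (∫ x, x i ^ (2 * m) ∂μ) := by
        rw [ofReal_integral_eq_lintegral_ofReal hint
          (ae_of_all _ fun x => (even_two_mul m).pow_nonneg _)]
        congr with x
        rw [Real.enorm_eq_ofReal_abs, ← ENNReal.ofReal_pow (abs_nonneg _),
          (even_two_mul m).pow_abs]
    _ ≤ _ := ENNReal.ofReal_le_ofReal <|
        (integral_coord_pow_two_mul_le hn hsupp hinv i m).trans_eq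
          (by rw [div_eq_mul_inv, inv_pow])

theorem lintegral_ofReal_lpNorm_sq_le (hn : 0 < n) (hsupp : μ (Metric.sphere 0 1)ᶜ = 0)
    (hinv : ∀ T : EuclideanSpace ℝ (Fin n) ≃ₗᵢ[ℝ] EuclideanSpace ℝ (Fin n), μ.map T = μ)
    {p : ℝ} (hp : 2 ≤ p) :
    ∫⁻ x, ENNReal.ofReal (lpNorm n (ENNReal.ofReal p) x ^ 2) ∂μ ≤
      ENNReal.ofReal ((p - 1) * n ^ (2 / p - 1)) := by
  have hp0 : 0 < p := by linarith
  have hn0 : (0 : ℝ) < n := by exact_mod_cast hn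
  have hv : 0 ≤ (p - 1) * (n : ℝ)⁻¹ := mul_nonneg (by linarith) (inv_nonneg.2 hn0.le)
  have harith : ((n : ℝ) * ((p - 1) * (n : ℝ)⁻¹) ^ (p / 2)) ^ (2 / p) =
      (p - 1) * n ^ (2 / p - 1) := by
    rw [Real.mul_rpow hn0.le (Real.rpow_nonneg hv _), ← Real.rpow_mul hv,
      show p / 2 * (2 / p) = 1 by field_simp, Real.rpow_one, Real.rpow_sub_one hn0.ne']
    ring
  calc ∫⁻ x, ENNReal.ofReal (lpNorm n (ENNReal.ofReal p) x ^ 2) ∂μ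
      = ∫⁻ x, (∑ i, ‖x i‖ₑ ^ p) ^ (2 / p) ∂μ := by simp_rw [ofReal_lpNorm_sq hp0]
    _ ≤ (∫⁻ x, ∑ i, ‖x i‖ₑ ^ p ∂μ) ^ (2 / p) :=
        lintegral_rpow_le_rpow_lintegral (by fun_prop) (by positivity)
          (by rw [div_le_one hp0]; linarith)
    _ = (∑ i, ∫⁻ x, ‖x i‖ₑ ^ p ∂μ) ^ (2 / p) := by
        rw [lintegral_finsetSum _ fun i _ => by fun_prop]
    _ ≤ (∑ _i : Fin n, ENNReal.ofReal (((p - 1) * (n : ℝ)⁻¹) ^ (p / 2))) ^ (2 / p) := by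
        gcongr with i; exact lintegral_enorm_coord_rpow_le hn hsupp hinv i hp
    _ = ENNReal.ofReal ((p - 1) * n ^ (2 / p - 1)) := by
        rw [sum_const, card_univ, Fintype.card_fin, nsmul_eq_mul, ← ENNReal.ofReal_natCast,
          ← ENNReal.ofReal_mul (by positivity), ENNReal.ofReal_rpow_of_nonneg
            (mul_nonneg hn0.le (Real.rpow_nonneg hv _)) (by positivity), harith]

theorem lintegral_ofReal_lpNorm_sq_le_log (hL : 1 ≤ Real.log n)
    (hsupp : μ (Metric.sphere 0 1)ᶜ = 0)
    (hinv : ∀ T : EuclideanSpace ℝ (Fin n) ≃ₗᵢ[ℝ] EuclideanSpace ℝ (Fin n), μ.map T = μ)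
    {q : ℝ≥0∞} (hq : 2 ≤ q) :
    ∫⁻ x, ENNReal.ofReal (lpNorm n q x ^ 2) ∂μ ≤
      ENNReal.ofReal ((16 * Real.log n - 8) * n ^ ((2 / q).toReal - 1)) := by
  have hn : 0 < n := Nat.pos_of_ne_zero fun h => by norm_num [h] at hL
  have : Fact (1 ≤ q) := ⟨one_le_two.trans hq⟩
  set L := Real.log n
  rcases le_total q (ENNReal.ofReal (4 * L)) with hqL | hLq
  · have hq_top : q ≠ ∞ := ne_top_of_le_ne_top ENNReal.ofReal_ne_top hqL
    have hp2 : 2 ≤ q.toReal := by simpa using ENNReal.toReal_mono hq_top hq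
    have hpL : q.toReal ≤ 4 * L := by
      have := ENNReal.toReal_mono ENNReal.ofReal_ne_top hqL
      rwa [ENNReal.toReal_ofReal (by linarith)] at this
    calc ∫⁻ x, ENNReal.ofReal (lpNorm n q x ^ 2) ∂μ
        = ∫⁻ x, ENNReal.ofReal (lpNorm n (ENNReal.ofReal q.toReal) x ^ 2) ∂μ := by
          rw [ENNReal.ofReal_toReal hq_top]
      _ ≤ ENNReal.ofReal ((q.toReal - 1) * n ^ (2 / q.toReal - 1)) :=
          lintegral_ofReal_lpNorm_sq_le hn hsupp hinv hp2
      _ ≤ _ := by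
          rw [ENNReal.toReal_div, ENNReal.toReal_ofNat]
          exact ENNReal.ofReal_le_ofReal
            (mul_le_mul_of_nonneg_right (by linarith) (by positivity))
  · have : Fact (1 ≤ ENNReal.ofReal (4 * L)) :=
      ⟨by rw [← ENNReal.ofReal_one]; gcongr; linarith⟩
    calc ∫⁻ x, ENNReal.ofReal (lpNorm n q x ^ 2) ∂μ
        ≤ ∫⁻ x, ENNReal.ofReal (lpNorm n (ENNReal.ofReal (4 * L)) x ^ 2) ∂μ :=
          lintegral_mono fun x => ENNReal.ofReal_le_ofReal <|
            pow_le_pow_left₀ (norm_nonneg _ : 0 ≤ lpNorm n q x) (lpNorm_le_lpNorm_of_le hLq x) 2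
      _ ≤ ENNReal.ofReal ((4 * L - 1) * n ^ (2 / (4 * L) - 1)) :=
          lintegral_ofReal_lpNorm_sq_le hn hsupp hinv (by linarith)
      _ ≤ _ := ENNReal.ofReal_le_ofReal (four_log_sub_one_mul_rpow_le hL ENNReal.toReal_nonneg)

end Sphere

/-- For `e` uniform on the unit Euclidean sphere, `n ≥ 8` and `2 ≤ q ≤ ∞`,
`E[‖e‖_q²] ≤ min{q−1, 16 ln n − 8}·n^{2/q−1}`. -/
theorem expectation_qnorm_sq_bound (n : ℕ) (hn : 8 ≤ n)
    (μ : Measure (EuclideanSpace ℝ (Fin n))) [IsProbabilityMeasure μ]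
    (hsupp : μ (Metric.sphere (0 : EuclideanSpace ℝ (Fin n)) 1)ᶜ = 0)
    (hinv : ∀ T : EuclideanSpace ℝ (Fin n) ≃ₗᵢ[ℝ] EuclideanSpace ℝ (Fin n),
      Measure.map T μ = μ)
    (q : ℝ≥0∞) (hq : 2 ≤ q) :
    ∫ e, lpNorm n q e ^ 2 ∂μ ≤
      (min (q - 1) (ENNReal.ofReal (16 * Real.log n - 8))).toReal *
        (n : ℝ) ^ ((2 / q).toReal - 1) := by
  have hL : 1 ≤ Real.log n := by
    have : (8 : ℝ) ≤ n := by exact_mod_cast hn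
    rw [Real.le_log_iff_exp_le (by positivity)]
    linarith [Real.exp_one_lt_d9]
  have hlog := lintegral_ofReal_lpNorm_sq_le_log hL hsupp hinv hq
  refine integral_le_of_lintegral_ofReal_le (fun e => sq_nonneg _) (by positivity) ?_
  rcases eq_or_ne q ∞ with rfl | hq_top
  · simpa [ENNReal.toReal_ofReal (by linarith : 0 ≤ 16 * Real.log n - 8)] using hlog
  have hp2 : 2 ≤ q.toReal := by simpa using ENNReal.toReal_mono hq_top hq
  have hp := lintegral_ofReal_lpNorm_sq_le (by omega) hsupp hinv hp2
  have h2q : (2 / q).toReal = 2 / q.toReal := by rw [ENNReal.toReal_div, ENNReal.toReal_ofNat]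
  rw [ENNReal.ofReal_toReal hq_top] at hp
  rw [h2q] at hlog ⊢
  rw [← ENNReal.ofReal_toReal hq_top, ← ENNReal.ofReal_one, ← ENNReal.ofReal_sub _ zero_le_one,
    ← ENNReal.ofReal_min, ENNReal.toReal_ofReal (le_min (by linarith) (by linarith)),
    min_mul_of_nonneg _ _ (by positivity), ENNReal.ofReal_min, ENNReal.ofReal_toReal hq_top]
  exact le_min hp hlog
end

section
/- For a = (2 log n)/(2 log n − 1) with n ≥ 3, the function d(x) = (1/(2(a−1)))‖x‖_a² on R^n is 1-strongly convex with respect to the 1-norm, up to a universal constant; precisely, d is strongly convex with respect to ‖·‖_a with modulus 1, and since ‖x‖₁ ≤ n^{1−1/a}‖x‖_a with n^{1−1/a} bounded by a constant times 1 for this choice of a, d(y) ≥ d(x) + ⟨∇d(x), y − x⟩ + (c/2)‖y − x‖₁² for some absolute constant c > 0. -/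
/-!
For `1 ≤ p ≤ 2` the squared `ℓ^p` norm is uniformly convex:
`‖x‖_p² + (p - 1)/2 ‖y‖_p² ≤ (‖x + y‖_p² + ‖x - y‖_p²)/2`. Coordinatewise this is a two-point
inequality for real numbers; the coordinates are combined by Minkowski's inequality in
`ℓ^(2/p)(ℝ²)` (equivalently, the reverse Minkowski inequality for `ℓ^(p/2)`). Hence
`d = ‖·‖_a² / (2(a - 1))` lies `‖u - w‖_a²/16` below the chord at midpoints, and bisecting the
segment from `x` to `y` repeatedly gives `d y ≥ d x + ⟨∇d x, y - x⟩ + ‖y - x‖_a²/4`. Finally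
Hölder gives `‖v‖₁² ≤ n^(2 - 2/a) ‖v‖_a²`, and for this `a` the factor `n^(2 - 2/a)` is exactly
`e`, so `c = e⁻¹/2 ≥ e⁻²` works.
-/

open Real Finset Filter Topology

lemma one_sub_mul_add_le_rpow_one_sub {p r : ℝ} (hp1 : 1 ≤ p) (hp2 : p ≤ 2) (hr0 : 0 ≤ r)
    (hr1 : r ≤ 1) : 1 - p * r + p * (p - 1) / 2 * r ^ 2 ≤ (1 - r) ^ p := by
  let g : ℝ → ℝ := fun u => (1 - u) ^ p - (1 - p * u + p * (p - 1) / 2 * u ^ 2)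
  have hg : ∀ u, HasDerivAt g (p * (1 - (p - 1) * u - (1 - u) ^ (p - 1))) u := by
    intro u
    have hpow := ((hasDerivAt_id u).const_sub 1).rpow_const (p := p) (Or.inr hp1)
    have hpoly := (((hasDerivAt_id u).const_mul p).const_sub 1).add
      (((hasDerivAt_id u).pow 2).const_mul (p * (p - 1) / 2))
    refine (hpow.sub hpoly).congr_deriv ?_
    simp only [id]
    ring
  have hmono : MonotoneOn g (Set.Icc 0 1) := by
    refine monotoneOn_of_hasDerivWithinAt_nonneg (convex_Icc 0 1)
      (fun u _ => (hg u).continuousAt.continuousWithinAt) (fun u _ => (hg u).hasDerivWithinAt)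
      fun u hu => ?_
    rw [interior_Icc] at hu
    have hbernoulli : (1 - u) ^ (p - 1) ≤ 1 - (p - 1) * u := by
      simpa [← sub_eq_add_neg] using rpow_one_add_le_one_add_mul_self (s := -u)
        (by linarith [hu.2]) (by linarith) (by linarith : p - 1 ≤ 1)
    nlinarith
  simpa [g] using hmono ⟨le_rfl, zero_le_one⟩ ⟨hr0, hr1⟩ hr0

lemma one_add_mul_sq_rpow_le {p r : ℝ} (hp1 : 1 ≤ p) (hp2 : p ≤ 2) (hr : |r| ≤ 1) :
    (1 + (p - 1) / 2 * r ^ 2) ^ (p / 2) ≤ (|1 + r| ^ p + |1 - r| ^ p) / 2 := by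
  wlog hr0 : 0 ≤ r generalizing r
  · have := this (r := -r) (by rwa [abs_neg]) (by linarith)
    rwa [neg_sq, ← sub_eq_add_neg, sub_neg_eq_add, add_comm (|1 - r| ^ p)] at this
  have hr1 : r ≤ 1 := (le_abs_self r).trans hr
  have hconcave := rpow_one_add_le_one_add_mul_self (s := (p - 1) / 2 * r ^ 2)
    (by nlinarith) (by linarith : 0 ≤ p / 2) (by linarith)
  have hplus := one_add_mul_self_le_rpow_one_add (by linarith : -1 ≤ r) hp1
  have hminus := one_sub_mul_add_le_rpow_one_sub hp1 hp2 hr0 hr1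
  rw [abs_of_nonneg (by linarith), abs_of_nonneg (by linarith)]
  linarith

lemma rpow_sq_add_mul_sq_le_of_abs_le {p s t : ℝ} (hp1 : 1 ≤ p) (hp2 : p ≤ 2)
    (h : |t| ≤ s) :
    (s ^ 2 + (p - 1) / 2 * t ^ 2) ^ (p / 2) ≤ (|s + t| ^ p + |s - t| ^ p) / 2 := by
  have hs : 0 ≤ s := (abs_nonneg t).trans h
  obtain ⟨r, hr, rfl⟩ : ∃ r, |r| ≤ 1 ∧ t = s * r := by
    rcases hs.eq_or_lt with rfl | hs
    · exact ⟨0, by simp, by simpa using h⟩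
    · exact ⟨t / s, by rwa [abs_div, abs_of_pos hs, div_le_one hs], by field_simp⟩
  have hpow : (s ^ 2) ^ (p / 2) = s ^ p := by
    rw [← rpow_natCast, ← rpow_mul hs]; ring_nf
  calc (s ^ 2 + (p - 1) / 2 * (s * r) ^ 2) ^ (p / 2)
      = s ^ p * (1 + (p - 1) / 2 * r ^ 2) ^ (p / 2) := by
        rw [← hpow, ← mul_rpow (sq_nonneg s) (by positivity)]; ring_nf
    _ ≤ s ^ p * ((|1 + r| ^ p + |1 - r| ^ p) / 2) := by
        gcongr; exact one_add_mul_sq_rpow_le hp1 hp2 hr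
    _ = (|s + s * r| ^ p + |s - s * r| ^ p) / 2 := by
        rw [← mul_one_add, ← mul_one_sub, abs_mul, abs_mul, abs_of_nonneg hs,
          mul_rpow hs (abs_nonneg _), mul_rpow hs (abs_nonneg _)]
        ring

/-- The two-point inequality of Ball, Carlen and Lieb, with `(p - 1) / 2` in place of the sharp
constant `p - 1`. -/
lemma rpow_sq_add_mul_sq_le {p : ℝ} (hp1 : 1 ≤ p) (hp2 : p ≤ 2) (s t : ℝ) :
    (s ^ 2 + (p - 1) / 2 * t ^ 2) ^ (p / 2) ≤ (|s + t| ^ p + |s - t| ^ p) / 2 := by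
  wlog hs : 0 ≤ s generalizing s t
  · have := this (-s) (-t) (by linarith)
    rwa [neg_sq, neg_sq, ← neg_add, neg_sub_neg, abs_neg, abs_sub_comm] at this
  wlog ht : 0 ≤ t generalizing t
  · have := this (-t) (by linarith)
    rwa [neg_sq, ← sub_eq_add_neg, sub_neg_eq_add, add_comm (|s - t| ^ p)] at this
  rcases le_total t s with hts | hst
  · exact rpow_sq_add_mul_sq_le_of_abs_le hp1 hp2 (by rwa [abs_of_nonneg ht])
  · calc (s ^ 2 + (p - 1) / 2 * t ^ 2) ^ (p / 2)
        ≤ (t ^ 2 + (p - 1) / 2 * s ^ 2) ^ (p / 2) := by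
          gcongr ?_ ^ _
          nlinarith [mul_le_mul hst hst hs ht]
      _ ≤ (|t + s| ^ p + |t - s| ^ p) / 2 :=
          rpow_sq_add_mul_sq_le_of_abs_le hp1 hp2 (by rwa [abs_of_nonneg hs])
      _ = (|s + t| ^ p + |s - t| ^ p) / 2 := by rw [add_comm t, abs_sub_comm]

lemma rpow_rpow_two_div {p x : ℝ} (hx : 0 ≤ x) (hp : p ≠ 0) : (x ^ p) ^ (2 / p) = x ^ 2 := by
  rw [← rpow_mul hx, mul_div_cancel₀ _ hp, rpow_two]

lemma rpow_div_two_rpow_two_div {p x : ℝ} (hx : 0 ≤ x) (hp : p ≠ 0) :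
    (x ^ (p / 2)) ^ (2 / p) = x := by
  rw [← rpow_mul hx, div_mul_div_comm, mul_comm, div_self (by positivity), rpow_one]

lemma mul_rpow_div_two_rpow_two_div {p c x : ℝ} (hc : 0 ≤ c) (hx : 0 ≤ x) (hp : p ≠ 0) :
    (c ^ (p / 2) * x) ^ (2 / p) = c * x ^ (2 / p) := by
  rw [mul_rpow (rpow_nonneg hc _) hx, rpow_div_two_rpow_two_div hc hp]

lemma rpow_sum_add_rpow_sum_le {ι : Type*} (s : Finset ι) {q : ℝ} (hq : 1 ≤ q)
    (α β : ι → ℝ) (hα : ∀ i, 0 ≤ α i) (hβ : ∀ i, 0 ≤ β i) :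
    ((∑ i ∈ s, α i) ^ q + (∑ i ∈ s, β i) ^ q) ^ (1 / q) ≤
      ∑ i ∈ s, (α i ^ q + β i ^ q) ^ (1 / q) := by
  have : Fact (1 ≤ ENNReal.ofReal q) := ⟨by simpa using ENNReal.ofReal_le_ofReal hq⟩
  have hq' : (ENNReal.ofReal q).toReal = q := ENNReal.toReal_ofReal (by linarith)
  have hnorm : ∀ a b : ℝ, 0 ≤ a → 0 ≤ b →
      ‖WithLp.toLp (ENNReal.ofReal q) (a, b)‖ = (a ^ q + b ^ q) ^ (1 / q) := by
    intro a b ha hb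
    rw [WithLp.prod_norm_eq_add (by rw [hq']; linarith), hq']
    simp [abs_of_nonneg ha, abs_of_nonneg hb]
  have := norm_sum_le s fun i => WithLp.toLp (ENNReal.ofReal q) (α i, β i)
  rw [← WithLp.toLp_sum, ← prod_mk_sum,
    hnorm _ _ (sum_nonneg fun i _ => hα i) (sum_nonneg fun i _ => hβ i)] at this
  simpa only [fun i => hnorm _ _ (hα i) (hβ i)] using this

noncomputable def lpNormSq {ι : Type*} [Fintype ι] (p : ℝ) (x : ι → ℝ) : ℝ :=
  (∑ i, |x i| ^ p) ^ (2 / p)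

section lpNormSq

variable {ι : Type*} [Fintype ι] {p : ℝ}

lemma lpNormSq_nonneg (p : ℝ) (x : ι → ℝ) : 0 ≤ lpNormSq p x :=
  rpow_nonneg (sum_nonneg fun _ _ => rpow_nonneg (abs_nonneg _) _) _

lemma lpNormSq_smul (hp : p ≠ 0) (c : ℝ) (x : ι → ℝ) :
    lpNormSq p (c • x) = c ^ 2 * lpNormSq p x := by
  simp only [lpNormSq, Pi.smul_apply, smul_eq_mul, abs_mul,
    mul_rpow (abs_nonneg c) (abs_nonneg _), ← mul_sum]
  rw [mul_rpow (rpow_nonneg (abs_nonneg c) _) (sum_nonneg fun i _ => rpow_nonneg (abs_nonneg _) _),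
    rpow_rpow_two_div (abs_nonneg c) hp, sq_abs]

lemma rpow_div_two_lpNormSq_add_mul_le (hp1 : 1 ≤ p) (hp2 : p ≤ 2) (x y : ι → ℝ) :
    (lpNormSq p x + (p - 1) / 2 * lpNormSq p y) ^ (p / 2) ≤
      (∑ i, |x i + y i| ^ p + ∑ i, |x i - y i| ^ p) / 2 := by
  have hp0 : p ≠ 0 := by positivity
  have hq : 1 ≤ 2 / p := by rw [le_div_iff₀ (by positivity)]; linarith
  have hk : 0 ≤ (p - 1) / 2 := by linarith
  -- Minkowski in `ℓ^(2/p)(ℝ²)` for the columns `(|x i| ^ p, k ^ (p/2) |y i| ^ p)`, `k = (p-1)/2`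
  have hmink := rpow_sum_add_rpow_sum_le univ hq (fun i => |x i| ^ p)
    (fun i => ((p - 1) / 2) ^ (p / 2) * |y i| ^ p) (fun i => rpow_nonneg (abs_nonneg _) _)
    (fun i => by positivity)
  simp only [← mul_sum, one_div_div, rpow_rpow_two_div (abs_nonneg _) hp0, sq_abs,
    mul_rpow_div_two_rpow_two_div hk (rpow_nonneg (abs_nonneg _) _) hp0,
    mul_rpow_div_two_rpow_two_div hk (sum_nonneg fun i _ => rpow_nonneg (abs_nonneg _) _) hp0]
    at hmink
  refine hmink.trans ((sum_le_sum fun i _ => rpow_sq_add_mul_sq_le hp1 hp2 (x i) (y i)).trans ?_)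
  rw [← sum_div, sum_add_distrib]

lemma lpNormSq_add_mul_lpNormSq_le (hp1 : 1 ≤ p) (hp2 : p ≤ 2) (x y : ι → ℝ) :
    lpNormSq p x + (p - 1) / 2 * lpNormSq p y ≤
      (lpNormSq p (x + y) + lpNormSq p (x - y)) / 2 := by
  have hq : 1 ≤ 2 / p := by rw [le_div_iff₀ (by positivity)]; linarith
  set U := ∑ i, |x i + y i| ^ p
  set V := ∑ i, |x i - y i| ^ p
  have hU : 0 ≤ U := sum_nonneg fun i _ => rpow_nonneg (abs_nonneg _) _
  have hV : 0 ≤ V := sum_nonneg fun i _ => rpow_nonneg (abs_nonneg _) _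
  have hN : 0 ≤ lpNormSq p x + (p - 1) / 2 * lpNormSq p y :=
    add_nonneg (lpNormSq_nonneg p x) (mul_nonneg (by linarith) (lpNormSq_nonneg p y))
  have hconvex := (convexOn_rpow hq).2 (Set.mem_Ici.2 hU) (Set.mem_Ici.2 hV)
    (by norm_num : (0 : ℝ) ≤ 1 / 2) (by norm_num : (0 : ℝ) ≤ 1 / 2) (by norm_num)
  simp only [smul_eq_mul] at hconvex
  calc lpNormSq p x + (p - 1) / 2 * lpNormSq p y
      = ((lpNormSq p x + (p - 1) / 2 * lpNormSq p y) ^ (p / 2)) ^ (2 / p) :=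
        (rpow_div_two_rpow_two_div hN (by positivity)).symm
    _ ≤ ((U + V) / 2) ^ (2 / p) := by
        gcongr; exact rpow_div_two_lpNormSq_add_mul_le hp1 hp2 x y
    _ = (1 / 2 * U + 1 / 2 * V) ^ (2 / p) := by ring_nf
    _ ≤ 1 / 2 * U ^ (2 / p) + 1 / 2 * V ^ (2 / p) := hconvex
    _ = (lpNormSq p (x + y) + lpNormSq p (x - y)) / 2 := by
        simp only [lpNormSq, U, V, Pi.add_apply, Pi.sub_apply]; ring

lemma lpNormSq_midpoint_add_le (hp1 : 1 ≤ p) (hp2 : p ≤ 2) (u w : ι → ℝ) :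
    lpNormSq p (midpoint ℝ u w) + (p - 1) / 8 * lpNormSq p (u - w) ≤
      (lpNormSq p u + lpNormSq p w) / 2 := by
  have h := lpNormSq_add_mul_lpNormSq_le hp1 hp2 (midpoint ℝ u w) ((2⁻¹ : ℝ) • (u - w))
  have hadd : midpoint ℝ u w + (2⁻¹ : ℝ) • (u - w) = u := by
    rw [midpoint_eq_smul_add, invOf_eq_inv]; module
  have hsub : midpoint ℝ u w - (2⁻¹ : ℝ) • (u - w) = w := by
    rw [midpoint_eq_smul_add, invOf_eq_inv]; module
  rw [lpNormSq_smul (by positivity), hadd, hsub] at h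
  linarith

lemma sq_sum_abs_le_card_rpow_mul_lpNormSq (hp : 1 ≤ p) (x : ι → ℝ) :
    (∑ i, |x i|) ^ 2 ≤ (Fintype.card ι : ℝ) ^ (2 - 2 / p) * lpNormSq p x := by
  have hp0 : p ≠ 0 := by positivity
  have holder := Real.rpow_sum_le_const_mul_sum_rpow univ x hp
  rw [card_univ] at holder
  have := rpow_le_rpow (by positivity) holder (by positivity : 0 ≤ 2 / p)
  rwa [rpow_rpow_two_div (sum_nonneg fun i _ => abs_nonneg _) hp0,
    mul_rpow (by positivity) (sum_nonneg fun i _ => rpow_nonneg (abs_nonneg _) _),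
    ← rpow_mul (by positivity), sub_mul, one_mul, mul_div_cancel₀ _ hp0] at this

lemma differentiable_lpNormSq (hp1 : 1 < p) (hp2 : p ≤ 2) :
    Differentiable ℝ fun x : EuclideanSpace ℝ ι => lpNormSq p x := by
  have hq : 1 ≤ 2 / p := by rw [le_div_iff₀ (by positivity)]; linarith
  intro x
  refine DifferentiableAt.rpow_const ?_ (Or.inr hq)
  refine DifferentiableAt.fun_sum fun i _ => ?_
  exact (hasDerivAt_abs_rpow _ hp1).differentiableAt.comp x
    (EuclideanSpace.proj i : EuclideanSpace ℝ ι →L[ℝ] ℝ).differentiableAt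

end lpNormSq

theorem HasFDerivAt.add_add_le_of_midpoint {E : Type*} [NormedAddCommGroup E]
    [NormedSpace ℝ E] {f Q : E → ℝ} {f' : E →L[ℝ] ℝ} {x : E} (hf : HasFDerivAt f f' x)
    (hQ : ∀ (c : ℝ) v, Q (c • v) = c ^ 2 * Q v)
    (hmid : ∀ u w, f (midpoint ℝ u w) + Q (u - w) / 4 ≤ (f u + f w) / 2) (y : E) :
    f x + f' (y - x) + Q (y - x) ≤ f y := by
  set v := y - x
  -- at `x + t v` with `t = 2⁻ᵏ`, `f` lies at least `t (1 - t) Q v` below the chord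
  have hdyadic : ∀ k : ℕ, f (x + (2⁻¹ : ℝ) ^ k • v) ≤
      (1 - 2⁻¹ ^ k) * f x + 2⁻¹ ^ k * f y - 2⁻¹ ^ k * (1 - 2⁻¹ ^ k) * Q v := by
    intro k
    induction k with
    | zero => simp [v]
    | succ k ih =>
      have hm : midpoint ℝ x (x + (2⁻¹ : ℝ) ^ k • v) = x + (2⁻¹ : ℝ) ^ (k + 1) • v := by
        rw [midpoint_eq_smul_add, invOf_eq_inv, pow_succ]; module
      have hsub : x - (x + (2⁻¹ : ℝ) ^ k • v) = (-(2⁻¹ : ℝ) ^ k) • v := by module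
      have h := hmid x (x + (2⁻¹ : ℝ) ^ k • v)
      rw [hm, hsub, hQ, neg_sq] at h
      rw [pow_succ] at h ⊢
      linarith
  have hslope : ∀ k : ℕ, slope (fun t : ℝ => f (x + t • v)) 0 (2⁻¹ ^ k) ≤
      f y - f x - (1 - 2⁻¹ ^ k) * Q v := by
    intro k
    rw [slope_def_field, zero_smul, add_zero, sub_zero, div_le_iff₀ (by positivity)]
    nlinarith [hdyadic k]
  have hderiv : HasDerivAt (fun t : ℝ => f (x + t • v)) (f' v) 0 := by
    refine HasFDerivAt.comp_hasDerivAt (f := fun t : ℝ => x + t • v) 0 ?_ ?_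
    · simpa using hf
    · simpa using ((hasDerivAt_id (0 : ℝ)).smul_const v).const_add x
  have hpow : Tendsto (fun k : ℕ => (2⁻¹ : ℝ) ^ k) atTop (𝓝[≠] 0) :=
    tendsto_nhdsWithin_of_tendsto_nhds_of_eventually_within _
      (tendsto_pow_atTop_nhds_zero_of_lt_one (by norm_num) (by norm_num))
      (Eventually.of_forall fun k => by simp)
  have hlim := le_of_tendsto_of_tendsto' ((hasDerivAt_iff_tendsto_slope.mp hderiv).comp hpow)
    (((tendsto_pow_atTop_nhds_zero_of_lt_one (by norm_num) (by norm_num)).const_sub 1).mul_const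
      (Q v) |>.const_sub (f y - f x)) hslope
  linarith

lemma add_inner_gradient_add_le_of_eq_mul_lpNormSq {ι : Type*} [Fintype ι] {p : ℝ}
    (hp1 : 1 < p) (hp2 : p ≤ 2) {d : EuclideanSpace ℝ ι → ℝ}
    (hd : ∀ x, d x = 1 / (2 * (p - 1)) * lpNormSq p x) (x y : EuclideanSpace ℝ ι) :
    d x + inner ℝ (gradient d x) (y - x) + lpNormSq p (y - x) / 4 ≤ d y := by
  have hdiff : Differentiable ℝ d := by
    rw [show d = _ from funext hd]
    exact (differentiable_lpNormSq hp1 hp2).const_mul _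
  have hmid : ∀ u w, d (midpoint ℝ u w) + lpNormSq p (u - w) / 4 / 4 ≤ (d u + d w) / 2 := by
    intro u w
    have h := lpNormSq_midpoint_add_le hp1.le hp2 u.ofLp w.ofLp
    rw [← WithLp.ofLp_sub 2 u w, show midpoint ℝ u.ofLp w.ofLp = (midpoint ℝ u w).ofLp by
      simp [midpoint_eq_smul_add]] at h
    have hp : 0 < p - 1 := by linarith
    rw [hd, hd, hd]
    field_simp
    linarith
  have hQ (c : ℝ) (v : EuclideanSpace ℝ ι) :
      lpNormSq p (c • v) / 4 = c ^ 2 * (lpNormSq p v / 4) := by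
    rw [WithLp.ofLp_smul, lpNormSq_smul (by positivity)]; ring
  rw [inner_gradient_left]
  exact (hdiff x).hasFDerivAt.add_add_le_of_midpoint
    (Q := fun v : EuclideanSpace ℝ ι => lpNormSq p v / 4) hQ hmid y

lemma one_lt_log_natCast {n : ℕ} (hn : 3 ≤ n) : 1 < log n := by
  have : (3 : ℝ) ≤ n := by exact_mod_cast hn
  rw [lt_log_iff_exp_lt (by positivity)]
  linarith [exp_one_lt_d9]

lemma two_mul_div_two_mul_sub_one_mem_Ioc {L : ℝ} (hL : 1 ≤ L) :
    2 * L / (2 * L - 1) ∈ Set.Ioc 1 2 := by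
  constructor
  · rw [one_lt_div (by linarith)]; linarith
  · rw [div_le_iff₀ (by linarith)]; linarith

lemma rpow_two_sub_two_div_eq_exp_one {x : ℝ} (hx : 0 < x) (hlog : 1 < log x) :
    x ^ (2 - 2 / (2 * log x / (2 * log x - 1))) = exp 1 := by
  have : 2 - 2 / (2 * log x / (2 * log x - 1)) = (log x)⁻¹ := by
    field_simp; ring
  rw [this, rpow_inv_log hx (by rintro rfl; norm_num at hlog)]

/-- For `a = 2 ln n/(2 ln n − 1)` with `n ≥ 3`, the function
`d(x) = ‖x‖_a²/(2(a−1))` is strongly convex w.r.t. the 1-norm with an absolute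
constant `c ≥ e⁻²`. -/
theorem prox_function_strongly_convex_one_norm (n : ℕ) (hn : 3 ≤ n)
    (a : ℝ) (ha : a = 2 * Real.log n / (2 * Real.log n - 1))
    (d : EuclideanSpace ℝ (Fin n) → ℝ)
    (hd : ∀ x, d x = 1 / (2 * (a - 1)) * (∑ i, |x i| ^ a) ^ (2 / a)) :
    ∃ c : ℝ, 0 < c ∧ Real.exp (-2) ≤ c ∧
      ∀ x y, d y ≥ d x + (inner ℝ (gradient d x) (y - x) : ℝ) +
        c / 2 * (∑ i, |y i - x i|) ^ 2 := by
  have hlog := one_lt_log_natCast hn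
  obtain ⟨ha1, ha2⟩ : a ∈ Set.Ioc 1 2 := ha ▸ two_mul_div_two_mul_sub_one_mem_Ioc hlog.le
  refine ⟨exp (-1) / 2, by positivity, ?_, fun x y => ?_⟩
  · rw [show (-2 : ℝ) = -1 + -1 by norm_num, exp_add]
    nlinarith [exp_neg_one_lt_half, exp_pos (-1)]
  have hconvex := add_inner_gradient_add_le_of_eq_mul_lpNormSq ha1 ha2 hd x y
  have hell1 : (∑ i, |y i - x i|) ^ 2 ≤ exp 1 * lpNormSq a (y - x) := by
    simpa [ha, rpow_two_sub_two_div_eq_exp_one (by positivity) hlog] using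
      sq_sum_abs_le_card_rpow_mul_lpNormSq ha1.le (y - x).ofLp
  have hgap : exp (-1) / 2 / 2 * (∑ i, |y i - x i|) ^ 2 ≤ lpNormSq a (y - x) / 4 :=
    calc exp (-1) / 2 / 2 * (∑ i, |y i - x i|) ^ 2
        ≤ exp (-1) / 2 / 2 * (exp 1 * lpNormSq a (y - x)) := by gcongr
      _ = lpNormSq a (y - x) / 4 := by rw [exp_neg]; field_simp; ring
  linarith
end
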